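/- Let A_1, …, A_n (n ≥ 2) be admissible full triangulated subcategories of a triangulated category T forming a semiorthogonal sequence. Then the generated subcategory ⟨A_1, …, A_n⟩ is admissible, and there is a natural isomorphism of functors L_{⟨A_1, …, A_n⟩} ≅ L_{A_1} ∘ L_{A_2} ∘ … ∘ L_{A_n} : T → T. -/

import Mathlib

/-!
Every admissible `A j` provides, for each object `X`, a distinguished triangle
`a ⟶ X ⟶ Y ⟶ a⟦1⟧` with `a ∈ A j` and `Y ∈ (A j)^⊥`, and `X ⟶ Y` is the reflection of `X`
into `(A j)^⊥`. Composing these reflections for `j = n-1, …, 0`, semiorthogonality keeps every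
intermediate object in the right orthogonals already reached, so the composite is a reflection
of `X` into `⋂ (A j)^⊥ = D^⊥`, where `D = ⟨A 0, …, A (n-1)⟩`. As reflections are unique up to
isomorphism, the composite of the mutation functors is the mutation functor of `D`.

For `W ∈ ^⊥(D^⊥)` the reflection `W ⟶ Y` vanishes, so `Y = 0`, and `W`, being built from `Y`
and objects of the `A j`, lies in `D`; hence `^⊥(D^⊥) = D`. Completing the reflection `X ⟶ Y`
to a triangle `d ⟶ X ⟶ Y ⟶ d⟦1⟧` therefore gives `d ∈ D`, and `d ⟶ X` is the coreflection of
`X` into `D`; these give the right adjoint of the inclusion of `D`. The left adjoint is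
obtained dually from the coreflections into the left orthogonals `^⊥(A j)`.
-/

namespace HPD

open CategoryTheory Category Limits Pretriangulated

universe w v u

variable {C : Type u} [Category.{v} C]

/-- The "essential image" of a set of objects under an assignment `Φ` on objects. -/
def essImageSet (Φ : C → C) (S : Set C) : Set C :=
  {Y : C | ∃ X ∈ S, Nonempty (Φ X ≅ Y)}

/-- The image of a set of objects under a functor to a full subcategory, regarded as a
set of objects of the ambient category (closed under isomorphism). -/
def projImageSet {Z : C → Prop} (π : C ⥤ ObjectProperty.FullSubcategory Z) (S : Set C) : Set C :=
  essImageSet (fun X : C => (π.obj X).obj) S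

section Preadd

variable [Preadditive C]

/-- `HomOrth B A` : every morphism from an object of `B` to an object of `A` vanishes. -/
def HomOrth (B A : Set C) : Prop :=
  ∀ ⦃X : C⦄, X ∈ B → ∀ ⦃Y : C⦄, Y ∈ A → ∀ f : X ⟶ Y, f = 0

/-- The right orthogonal `A^⊥` of a set of objects `A`. -/
def rightOrth (A : Set C) : Set C :=
  {Y : C | ∀ ⦃X : C⦄, X ∈ A → ∀ f : X ⟶ Y, f = 0}

/-- The left orthogonal `^⊥A` of a set of objects `A`. -/
def leftOrth (A : Set C) : Set C :=
  {X : C | ∀ ⦃Y : C⦄, Y ∈ A → ∀ f : X ⟶ Y, f = 0}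

/-- A subcategory (set of objects) is admissible if the inclusion of the corresponding
full subcategory admits both a left and a right adjoint. -/
def IsAdmissibleSub (A : Set C) : Prop :=
  (ObjectProperty.ι (· ∈ A)).IsRightAdjoint ∧
    (ObjectProperty.ι (· ∈ A)).IsLeftAdjoint

/-- `L : C ⥤ C` is a left mutation functor through `B`, i.e. it is (isomorphic to)
the composition `i_{B^⊥} ∘ i_{B^⊥}^*` of the left adjoint of the inclusion of the right
orthogonal of `B` with this inclusion. -/
def IsLeftMutation (B : Set C) (L : C ⥤ C) : Prop :=
  ∃ p : C ⥤ ObjectProperty.FullSubcategory (· ∈ rightOrth B),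
    Nonempty (p ⊣ ObjectProperty.ι (· ∈ rightOrth B)) ∧
      Nonempty (L ≅ p ⋙ ObjectProperty.ι (· ∈ rightOrth B))

end Preadd

section Triang

variable [HasZeroObject C] [Preadditive C] [HasShift C ℤ]
  [∀ n : ℤ, (shiftFunctor C n).Additive] [Pretriangulated C]

/-- A full triangulated subcategory, recorded as its (isomorphism-closed) set of objects. -/
structure IsTriangSub (A : Set C) : Prop where
  zero_mem : ∀ ⦃Z : C⦄, IsZero Z → Z ∈ A
  iso_mem : ∀ ⦃X Y : C⦄, (X ≅ Y) → X ∈ A → Y ∈ A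
  shift_mem : ∀ ⦃X : C⦄ (n : ℤ), X ∈ A → (X⟦n⟧ : C) ∈ A
  cone_mem : ∀ T : Triangle C, (T ∈ distTriang C) → T.obj₁ ∈ A → T.obj₂ ∈ A → T.obj₃ ∈ A

/-- A full triangulated subcategory is admissible if it moreover has the two adjoints. -/
def IsAdmissible (A : Set C) : Prop :=
  IsTriangSub A ∧ IsAdmissibleSub A

/-- The smallest full triangulated subcategory containing a given set of objects. -/
def generated (S : Set C) : Set C :=
  ⋂₀ {P : Set C | IsTriangSub P ∧ S ⊆ P}

/-- A semiorthogonal sequence of subcategories: no nonzero morphisms from later to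
earlier ones. -/
def Semiorthogonal {n : ℕ} (A : Fin n → Set C) : Prop :=
  ∀ ⦃l k : Fin n⦄, l < k → HomOrth (A k) (A l)

/-- `t` admits a filtration `0 = t_n → t_{n-1} → ⋯ → t_0 = t` whose successive cones lie
in the prescribed subcategories. -/
def HasFiltration {n : ℕ} (A : Fin n → Set C) (t : C) : Prop :=
  ∃ (F : Fin (n + 1) → C) (f : ∀ j : Fin n, F j.succ ⟶ F j.castSucc),
    IsZero (F (Fin.last n)) ∧ F 0 = t ∧
      ∀ j : Fin n, ∃ (a : C) (g : F j.castSucc ⟶ a) (h : a ⟶ (F j.succ)⟦(1 : ℤ)⟧),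
        (Triangle.mk (f j) g h ∈ distTriang C) ∧ a ∈ A j

/-- A semiorthogonal decomposition of (the bounded derived category) `C`. -/
structure IsSOD {n : ℕ} (A : Fin n → Set C) : Prop where
  triangSub : ∀ j, IsTriangSub (A j)
  semiorth : Semiorthogonal A
  filt : ∀ t : C, HasFiltration A t

/-- A semiorthogonal decomposition of a full triangulated subcategory `D` of `C`. -/
structure IsSODWithin (D : Set C) {n : ℕ} (A : Fin n → Set C) : Prop where
  subset : ∀ j, A j ⊆ D
  triangSub : ∀ j, IsTriangSub (A j)
  semiorth : Semiorthogonal A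
  filt : ∀ t ∈ D, HasFiltration A t

/-- The `n`-th power of an autoequivalence, applied to an object. -/
def twistFun (τ : C ≌ C) : ℤ → C → C
  | Int.ofNat m => (fun X : C => τ.functor.obj X)^[m]
  | Int.negSucc m => (fun X : C => τ.inverse.obj X)^[m + 1]

/-- The twist `S(n) = τⁿ(S)` of a set of objects (as an essential image). -/
def twistSet (τ : C ≌ C) (n : ℤ) (S : Set C) : Set C :=
  essImageSet (twistFun τ n) S

/-- A Lefschetz decomposition of `C` of length `i` with respect to the autoequivalence `τ`:
`C = ⟨A 0, (A 1)(1), …, (A (i-1))(i-1)⟩` with `A 0 ⊇ A 1 ⊇ ⋯ ⊇ A (i-1)` admissible. -/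
structure IsLefschetz (τ : C ≌ C) (i : ℕ) (A : ℕ → Set C) : Prop where
  pos : 0 < i
  desc : ∀ m : ℕ, m + 1 < i → A (m + 1) ⊆ A m
  adm : ∀ m : ℕ, m < i → IsAdmissible (A m)
  sod : IsSOD (fun j : Fin i => twistSet τ ((j : ℕ) : ℤ) (A (j : ℕ)))

/-- The primitive component `𝔞_k`, the right orthogonal of `A (k+1)` inside `A k`. -/
def primComp (A : ℕ → Set C) (m : ℕ) : Set C :=
  A m ∩ rightOrth (A (m + 1))

/-- Composition of a finite family of endofunctors: `compFam L = L 0 ∘ L 1 ∘ ⋯ ∘ L (m-1)`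
(so `L (m-1)` is applied first). -/
def compFam : ∀ {m : ℕ}, (Fin m → (C ⥤ C)) → (C ⥤ C)
  | 0, _ => 𝟭 C
  | _ + 1, L => compFam (fun j => L j.succ) ⋙ L 0

end Triang

section Serre

/-- A Serre functor on the `k`-linear triangulated category `C`: a `k`-linear exact
autoequivalence `S` together with pairings exhibiting `Hom(X, Y) ≅ Hom(Y, S X)^*`
naturally in both variables. -/
structure SerreData (k : Type w) [Field k] (C : Type u) [Category.{v} C] [Preadditive C]
    [CategoryTheory.Linear k C] [HasZeroObject C] [HasShift C ℤ]
    [∀ n : ℤ, (shiftFunctor C n).Additive] [Pretriangulated C] where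
  S : C ≌ C
  additive : S.functor.Additive
  linear : letI := additive; S.functor.Linear k
  commShift : S.functor.CommShift ℤ
  triangulated : letI := commShift; S.functor.IsTriangulated
  pairing : ∀ X Y : C, (X ⟶ Y) →ₗ[k] Module.Dual k (Y ⟶ S.functor.obj X)
  pairing_bijective : ∀ X Y : C, Function.Bijective (pairing X Y)
  pairing_nat_left : ∀ ⦃X' X Y : C⦄ (a : X' ⟶ X) (φ : X ⟶ Y) (ψ : Y ⟶ S.functor.obj X'),
    pairing X' Y (a ≫ φ) ψ = pairing X Y φ (ψ ≫ S.functor.map a)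
  pairing_nat_right : ∀ ⦃X Y Y' : C⦄ (b : Y ⟶ Y') (φ : X ⟶ Y) (ψ : Y' ⟶ S.functor.obj X),
    pairing X Y' (φ ≫ b) ψ = pairing X Y φ (b ≫ ψ)

end Serre

section Reflection

variable {S T R : Set C} {X Y Z : C}

structure IsReflection (S : Set C) (u : X ⟶ Y) : Prop where
  mem : Y ∈ S
  bijective : ∀ Z ∈ S, Function.Bijective fun ψ : Y ⟶ Z => u ≫ ψ

structure IsCoreflection (S : Set C) (v : Y ⟶ X) : Prop where
  mem : Y ∈ S
  bijective : ∀ W ∈ S, Function.Bijective fun ψ : W ⟶ Y => ψ ≫ v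

lemma IsReflection.id (hX : X ∈ S) : IsReflection S (𝟙 X) :=
  ⟨hX, fun _ _ => by simp only [id_comp]; exact Function.bijective_id⟩

lemma IsCoreflection.id (hX : X ∈ S) : IsCoreflection S (𝟙 X) :=
  ⟨hX, fun _ _ => by simp only [comp_id]; exact Function.bijective_id⟩

lemma IsReflection.comp {u : X ⟶ Y} {v : Y ⟶ Z} (hu : IsReflection S u)
    (hv : IsReflection T v) (hZ : Z ∈ R) (hRS : R ⊆ S) (hRT : R ⊆ T) :
    IsReflection R (u ≫ v) :=
  ⟨hZ, fun W hW => by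
    simpa only [Function.comp_def, assoc] using
      (hu.bijective W (hRS hW)).comp (hv.bijective W (hRT hW))⟩

lemma IsCoreflection.comp {w : Z ⟶ Y} {v : Y ⟶ X} (hw : IsCoreflection T w)
    (hv : IsCoreflection S v) (hZ : Z ∈ R) (hRT : R ⊆ T) (hRS : R ⊆ S) :
    IsCoreflection R (w ≫ v) :=
  ⟨hZ, fun W hW => by
    simpa only [Function.comp_def, assoc] using
      (hv.bijective W (hRS hW)).comp (hw.bijective W (hRT hW))⟩

lemma IsReflection.of_iso (e : Y ≅ Z) (hZ : Z ∈ S) : IsReflection S e.hom :=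
  ⟨hZ, fun _ _ => ⟨fun _ _ h => (cancel_epi e.hom).1 h, fun ψ => ⟨e.inv ≫ ψ, by simp⟩⟩⟩

lemma IsReflection.uniq {u : X ⟶ Y} {u' : X ⟶ Z} (hu : IsReflection S u)
    (hu' : IsReflection S u') : ∃ e : Y ≅ Z, u ≫ e.hom = u' := by
  obtain ⟨φ, hφ : u ≫ φ = u'⟩ := (hu.bijective Z hu'.mem).2 u'
  obtain ⟨ψ, hψ : u' ≫ ψ = u⟩ := (hu'.bijective Y hu.mem).2 u
  refine ⟨⟨φ, ψ, (hu.bijective Y hu.mem).1 ?_, (hu'.bijective Z hu'.mem).1 ?_⟩, hφ⟩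
  · simp only [reassoc_of% hφ, hψ, comp_id]
  · simp only [reassoc_of% hψ, hφ, comp_id]

lemma nonempty_iso_of_isReflection {F G : C ⥤ C} {η : 𝟭 C ⟶ F} {ε : 𝟭 C ⟶ G}
    (hη : ∀ X, IsReflection S (η.app X)) (hε : ∀ X, IsReflection S (ε.app X)) :
    Nonempty (F ≅ G) := by
  choose e he using fun X => (hη X).uniq (hε X)
  refine ⟨NatIso.ofComponents e fun {X Y} f => ((hη X).bijective _ (hε Y).mem).1 ?_⟩
  dsimp only
  rw [← η.naturality_assoc, he, reassoc_of% (he X)]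
  exact ε.naturality f

lemma isReflection_unit {p : C ⥤ ObjectProperty.FullSubcategory (· ∈ S)}
    (adj : p ⊣ ObjectProperty.ι (· ∈ S)) (X : C) : IsReflection S (adj.unit.app X) :=
  ⟨(p.obj X).property, fun Z hZ => ((ObjectProperty.fullyFaithfulι _).homEquiv.symm.trans
    (adj.homEquiv X ⟨Z, hZ⟩)).bijective⟩

lemma isCoreflection_counit {r : C ⥤ ObjectProperty.FullSubcategory (· ∈ S)}
    (adj : ObjectProperty.ι (· ∈ S) ⊣ r) (X : C) : IsCoreflection S (adj.counit.app X) :=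
  ⟨(r.obj X).property, fun W hW => ((ObjectProperty.fullyFaithfulι _).homEquiv.symm.trans
    (adj.homEquiv ⟨W, hW⟩ X).symm).bijective⟩

lemma isRightAdjoint_ι_of_isReflection (h : ∀ X : C, ∃ (Y : C) (u : X ⟶ Y), IsReflection S u) :
    (ObjectProperty.ι (· ∈ S)).IsRightAdjoint := by
  choose Y u hu using h
  let e (X : C) (Z : ObjectProperty.FullSubcategory (· ∈ S)) :
      ((⟨Y X, (hu X).mem⟩ : ObjectProperty.FullSubcategory (· ∈ S)) ⟶ Z) ≃ (X ⟶ Z.obj) :=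
    (ObjectProperty.fullyFaithfulι _).homEquiv.trans
      (Equiv.ofBijective _ ((hu X).bijective Z.obj Z.property))
  exact (Adjunction.adjunctionOfEquivLeft e fun _ _ _ _ _ => (assoc _ _ _).symm).isRightAdjoint

lemma isLeftAdjoint_ι_of_isCoreflection
    (h : ∀ X : C, ∃ (K : C) (v : K ⟶ X), IsCoreflection S v) :
    (ObjectProperty.ι (· ∈ S)).IsLeftAdjoint := by
  choose K v hv using h
  let e (W : ObjectProperty.FullSubcategory (· ∈ S)) (X : C) :
      (W ⟶ (⟨K X, (hv X).mem⟩ : ObjectProperty.FullSubcategory (· ∈ S))) ≃ (W.obj ⟶ X) :=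
    (ObjectProperty.fullyFaithfulι _).homEquiv.trans
      (Equiv.ofBijective _ ((hv X).bijective W.obj W.property))
  refine (Adjunction.adjunctionOfEquivRight (fun W X => (e W X).symm)
    fun W' W X f g => ?_).isLeftAdjoint
  rw [Equiv.symm_apply_eq]
  conv_lhs => rw [← (e W X).apply_symm_apply g]
  exact (assoc _ _ _).symm

end Reflection

section Orthogonal

variable [Preadditive C] {S : Set C} {X Y : C}

lemma mem_rightOrth_iUnion {ι : Sort*} {A : ι → Set C} :
    Y ∈ rightOrth (⋃ j, A j) ↔ ∀ j, Y ∈ rightOrth (A j) :=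
  ⟨fun h j _ hX => h (Set.mem_iUnion_of_mem j hX), fun h _ hX =>
    let ⟨j, hj⟩ := Set.mem_iUnion.1 hX; h j hj⟩

lemma mem_leftOrth_iUnion {ι : Sort*} {A : ι → Set C} :
    X ∈ leftOrth (⋃ j, A j) ↔ ∀ j, X ∈ leftOrth (A j) :=
  ⟨fun h j _ hY => h (Set.mem_iUnion_of_mem j hY), fun h _ hY =>
    let ⟨j, hj⟩ := Set.mem_iUnion.1 hY; h j hj⟩

lemma mem_rightOrth_of_iso (e : X ≅ Y) (hX : X ∈ rightOrth S) : Y ∈ rightOrth S :=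
  fun _ hW f => (cancel_mono e.inv).1 (by rw [zero_comp]; exact hX hW _)

lemma IsReflection.isZero {u : X ⟶ Y} (hu : IsReflection S u) (h : u = 0) : IsZero Y :=
  (IsZero.iff_id_eq_zero Y).2 ((hu.bijective Y hu.mem).1 (by simp [h]))

lemma IsCoreflection.isZero {v : Y ⟶ X} (hv : IsCoreflection S v) (h : v = 0) : IsZero Y :=
  (IsZero.iff_id_eq_zero Y).2 ((hv.bijective Y hv.mem).1 (by simp [h]))

lemma IsLeftMutation.exists_unit {B : Set C} {L : C ⥤ C} (h : IsLeftMutation B L) :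
    ∃ U : 𝟭 C ⟶ L, ∀ X, IsReflection (rightOrth B) (U.app X) := by
  obtain ⟨p, ⟨adj⟩, ⟨e⟩⟩ := h
  refine ⟨adj.unit ≫ e.inv, fun X => ?_⟩
  have hL : L.obj X ∈ rightOrth B := mem_rightOrth_of_iso (e.app X).symm (p.obj X).property
  exact (isReflection_unit adj X).comp (.of_iso (e.app X).symm hL) hL le_rfl le_rfl

lemma Semiorthogonal.tail {m : ℕ} {A : Fin (m + 1) → Set C} (h : Semiorthogonal A) :
    Semiorthogonal fun j : Fin m => A j.succ :=
  fun _ _ hlk => h (Fin.succ_lt_succ_iff.2 hlk)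

lemma Semiorthogonal.init {m : ℕ} {A : Fin (m + 1) → Set C} (h : Semiorthogonal A) :
    Semiorthogonal fun j : Fin m => A j.castSucc :=
  fun _ _ hlk => h (Fin.castSucc_lt_castSucc_iff.2 hlk)

end Orthogonal

section Shift

variable [HasShift C ℤ] {S : Set C}

def IsShiftClosed (S : Set C) : Prop :=
  ∀ ⦃X : C⦄ (n : ℤ), X ∈ S → (X⟦n⟧ : C) ∈ S

lemma IsShiftClosed.iUnion {ι : Sort*} {A : ι → Set C} (h : ∀ j, IsShiftClosed (A j)) :
    IsShiftClosed (⋃ j, A j) := fun _ n hX =>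
  let ⟨j, hj⟩ := Set.mem_iUnion.1 hX; Set.mem_iUnion_of_mem j (h j n hj)

variable [Preadditive C] [∀ n : ℤ, (shiftFunctor C n).Additive]

lemma IsShiftClosed.rightOrth (hS : IsShiftClosed S) : IsShiftClosed (rightOrth S) := by
  intro Y n hY X hX f
  apply (shiftFunctor C (-n)).map_injective
  rw [Functor.map_zero,
    ← cancel_mono ((shiftFunctorCompIsoId C n (-n) (add_neg_cancel n)).app Y).hom, zero_comp]
  exact hY (hS (-n) hX) _

lemma IsShiftClosed.leftOrth (hS : IsShiftClosed S) : IsShiftClosed (leftOrth S) := by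
  intro X n hX Z hZ f
  apply (shiftFunctor C (-n)).map_injective
  rw [Functor.map_zero,
    ← cancel_epi ((shiftFunctorCompIsoId C n (-n) (add_neg_cancel n)).app X).inv, comp_zero]
  exact hX (hS (-n) hZ) _

end Shift

section Pretriangulated

variable [HasZeroObject C] [Preadditive C] [HasShift C ℤ]
  [∀ n : ℤ, (shiftFunctor C n).Additive] [Pretriangulated C]
  {S A B P : Set C} {X Y Z K : C} {T : Triangle C}

lemma isTriangSub_rightOrth (hS : IsShiftClosed S) : IsTriangSub (rightOrth S) where
  zero_mem _ hZ _ _ f := hZ.eq_of_tgt f 0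
  iso_mem _ _ e hX := mem_rightOrth_of_iso e hX
  shift_mem := hS.rightOrth
  cone_mem T hT h₁ h₂ _ hW f := by
    obtain ⟨g, rfl⟩ := Triangle.coyoneda_exact₃ T hT f (hS.rightOrth 1 h₁ hW _)
    rw [h₂ hW g, zero_comp]

lemma isTriangSub_leftOrth (hS : IsShiftClosed S) : IsTriangSub (leftOrth S) where
  zero_mem _ hZ _ _ f := hZ.eq_of_src f 0
  iso_mem _ _ e hX _ hZ f := (cancel_epi e.hom).1 (by rw [comp_zero]; exact hX hZ _)
  shift_mem := hS.leftOrth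
  cone_mem T hT h₁ h₂ _ hZ f := by
    obtain ⟨g, rfl⟩ := Triangle.yoneda_exact₃ T hT f (h₂ hZ _)
    rw [hS.leftOrth 1 h₁ hZ g, comp_zero]

lemma isTriangSub_generated (S : Set C) : IsTriangSub (generated S) where
  zero_mem _ hZ := Set.mem_sInter.2 fun _ hP => hP.1.zero_mem hZ
  iso_mem _ _ e hX := Set.mem_sInter.2 fun P hP => hP.1.iso_mem e (Set.mem_sInter.1 hX P hP)
  shift_mem _ n hX := Set.mem_sInter.2 fun P hP => hP.1.shift_mem n (Set.mem_sInter.1 hX P hP)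
  cone_mem T hT h₁ h₂ := Set.mem_sInter.2 fun P hP =>
    hP.1.cone_mem T hT (Set.mem_sInter.1 h₁ P hP) (Set.mem_sInter.1 h₂ P hP)

lemma subset_generated (S : Set C) : S ⊆ generated S :=
  fun _ hX => Set.mem_sInter.2 fun _ hP => hP.2 hX

lemma generated_subset (hP : IsTriangSub P) (h : S ⊆ P) : generated S ⊆ P :=
  Set.sInter_subset_of_mem ⟨hP, h⟩

lemma rightOrth_generated (hS : IsShiftClosed S) : rightOrth (generated S) = rightOrth S :=
  Set.Subset.antisymm (fun _ hY _ hX f => hY (subset_generated S hX) f) fun _ hY _ hX f =>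
    generated_subset (isTriangSub_leftOrth hS.rightOrth) (fun _ hX' _ hY' f' => hY' hX' f')
      hX hY f

lemma leftOrth_generated (hS : IsShiftClosed S) : leftOrth (generated S) = leftOrth S :=
  Set.Subset.antisymm (fun _ hX _ hY f => hX (subset_generated S hY) f) fun _ hX _ hY f =>
    generated_subset (isTriangSub_rightOrth hS.leftOrth) (fun _ hY' _ hX' f' => hX' hY' f')
      hY hX f

lemma bijective_mor₂_comp (hT : T ∈ distTriang C)
    (h₁ : ∀ f : T.obj₁ ⟶ Z, f = 0) (h₁' : ∀ f : T.obj₁⟦(1 : ℤ)⟧ ⟶ Z, f = 0) :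
    Function.Bijective fun ψ : T.obj₃ ⟶ Z => T.mor₂ ≫ ψ := by
  refine ⟨(injective_iff_map_eq_zero (Preadditive.leftComp Z T.mor₂)).2 fun ψ hψ => ?_,
    fun φ => ?_⟩
  · obtain ⟨g, rfl⟩ := Triangle.yoneda_exact₃ T hT ψ hψ
    rw [h₁' g, comp_zero]
  · obtain ⟨g, rfl⟩ := Triangle.yoneda_exact₂ T hT φ (h₁ _)
    exact ⟨g, rfl⟩

lemma bijective_comp_mor₁ (hT : T ∈ distTriang C)
    (h₃ : ∀ f : X ⟶ T.obj₃, f = 0) (h₃' : ∀ f : X ⟶ T.obj₃⟦(-1 : ℤ)⟧, f = 0) :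
    Function.Bijective fun ψ : X ⟶ T.obj₁ => ψ ≫ T.mor₁ := by
  refine ⟨(injective_iff_map_eq_zero (Preadditive.rightComp X T.mor₁)).2 fun ψ hψ => ?_,
    fun φ => ?_⟩
  · obtain ⟨g, rfl⟩ := Triangle.coyoneda_exact₂ _ (inv_rot_of_distTriang T hT) ψ hψ
    rw [h₃' g]
    exact zero_comp
  · obtain ⟨g, rfl⟩ := Triangle.coyoneda_exact₂ T hT φ (h₃ _)
    exact ⟨g, rfl⟩

lemma isReflection_rightOrth_mor₂ (hT : T ∈ distTriang C) (hS : IsShiftClosed S)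
    (h₁ : T.obj₁ ∈ S) (h₃ : T.obj₃ ∈ rightOrth S) : IsReflection (rightOrth S) T.mor₂ :=
  ⟨h₃, fun _ hZ => bijective_mor₂_comp hT (hZ h₁) (hZ (hS 1 h₁))⟩

lemma isCoreflection_mor₁ (hT : T ∈ distTriang C) (hS : IsShiftClosed S)
    (h₁ : T.obj₁ ∈ S) (h₃ : T.obj₃ ∈ rightOrth S) : IsCoreflection S T.mor₁ :=
  ⟨h₁, fun _ hW => bijective_comp_mor₁ hT (h₃ hW) (hS.rightOrth (-1) h₃ hW)⟩

lemma isReflection_mor₂ (hT : T ∈ distTriang C) (hS : IsShiftClosed S)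
    (h₁ : T.obj₁ ∈ leftOrth S) (h₃ : T.obj₃ ∈ S) : IsReflection S T.mor₂ :=
  ⟨h₃, fun _ hZ => bijective_mor₂_comp hT (h₁ hZ) (hS.leftOrth 1 h₁ hZ)⟩

lemma isCoreflection_leftOrth_mor₁ (hT : T ∈ distTriang C) (hS : IsShiftClosed S)
    (h₁ : T.obj₁ ∈ leftOrth S) (h₃ : T.obj₃ ∈ S) : IsCoreflection (leftOrth S) T.mor₁ :=
  ⟨h₁, fun _ hW => bijective_comp_mor₁ hT (hW h₃) (hW (hS (-1) h₃))⟩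

lemma mem_leftOrth_of_isReflection_mor₂ (hT : T ∈ distTriang C) (hS : IsShiftClosed S)
    (hu : IsReflection S T.mor₂) : T.obj₁ ∈ leftOrth S := by
  intro Z hZ φ
  -- `T.mor₂` is universal also towards `Z⟦1⟧`, so `φ⟦1⟧` factors through `-T.mor₁⟦1⟧`, and
  -- then through `(T.mor₁ ≫ T.mor₂)⟦1⟧ = 0`.
  have h : T.mor₃ ≫ φ⟦(1 : ℤ)⟧' = 0 :=
    (hu.bijective _ (hS 1 hZ)).1 (by simp [comp_distTriang_mor_zero₂₃_assoc _ hT])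
  obtain ⟨g, hg⟩ : ∃ g : T.obj₂⟦(1 : ℤ)⟧ ⟶ Z⟦(1 : ℤ)⟧, φ⟦1⟧' = (-T.mor₁⟦1⟧') ≫ g :=
    Triangle.yoneda_exact₃ _ (rot_of_distTriang _ hT) _ h
  obtain ⟨g₀, rfl⟩ := (shiftFunctor C (1 : ℤ)).map_surjective g
  obtain ⟨ψ, hψ : T.mor₂ ≫ ψ = g₀⟩ := (hu.bijective Z hZ).2 g₀
  apply (shiftFunctor C (1 : ℤ)).map_injective
  rw [hg, ← hψ, Preadditive.neg_comp, ← Functor.map_comp, comp_distTriang_mor_zero₁₂_assoc _ hT,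
    zero_comp, Functor.map_zero, neg_zero]

lemma mem_rightOrth_of_isCoreflection_mor₁ (hT : T ∈ distTriang C) (hS : IsShiftClosed S)
    (hv : IsCoreflection S T.mor₁) : T.obj₃ ∈ rightOrth S := by
  intro W hW φ
  let e := shiftFunctorCompIsoId C (1 : ℤ) (-1) (by norm_num)
  -- Read through `e`, `(φ ≫ T.mor₃)⟦-1⟧` is a map `W⟦-1⟧ ⟶ T.obj₁` killed by `T.mor₁`.
  have h : φ ≫ T.mor₃ = 0 := by
    apply (shiftFunctor C (-1 : ℤ)).map_injective
    rw [Functor.map_zero, ← cancel_mono (e.hom.app T.obj₁), zero_comp]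
    refine (hv.bijective _ (hS (-1) hW)).1 ?_
    have := e.hom.naturality T.mor₁
    dsimp only [Functor.comp_map, Functor.id_map] at this
    dsimp only
    rw [assoc, ← this, ← Functor.map_comp_assoc, assoc, comp_distTriang_mor_zero₃₁ _ hT,
      comp_zero, Functor.map_zero, zero_comp, zero_comp]
  obtain ⟨g, rfl⟩ := Triangle.coyoneda_exact₃ _ hT φ h
  obtain ⟨g₀, rfl⟩ := (hv.bijective W hW).2 g
  simp [comp_distTriang_mor_zero₁₂ _ hT]

def HasFiberIn (A : Set C) (u : X ⟶ Y) : Prop :=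
  ∃ (a : C) (f : a ⟶ X) (h : Y ⟶ a⟦(1 : ℤ)⟧), a ∈ A ∧ Triangle.mk f u h ∈ distTriang C

def HasCofiberIn (A : Set C) (v : K ⟶ X) : Prop :=
  ∃ (a : C) (g : X ⟶ a) (h : a ⟶ K⟦(1 : ℤ)⟧), a ∈ A ∧ Triangle.mk v g h ∈ distTriang C

lemma HasFiberIn.mem_rightOrth {u : X ⟶ Y} (hu : HasFiberIn A u) (hA : IsShiftClosed A)
    (hBA : HomOrth B A) (hX : X ∈ rightOrth B) : Y ∈ rightOrth B := by
  obtain ⟨a, f, h, ha, hT⟩ := hu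
  intro b hb φ
  obtain ⟨g, rfl⟩ := Triangle.coyoneda_exact₃ _ hT φ (hBA hb (hA 1 ha) _)
  rw [hX hb g]
  exact zero_comp

lemma HasCofiberIn.mem_leftOrth {v : K ⟶ X} (hv : HasCofiberIn A v) (hA : IsShiftClosed A)
    (hAB : HomOrth A B) (hX : X ∈ leftOrth B) : K ∈ leftOrth B := by
  obtain ⟨a, g, h, ha, hT⟩ := hv
  intro b hb φ
  obtain ⟨ψ, rfl⟩ := Triangle.yoneda_exact₂ _ (inv_rot_of_distTriang _ hT) φ
    (hAB (hA (-1) ha) hb _)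
  exact (hX hb ψ).symm ▸ comp_zero

lemma HasFiberIn.mem_of_mem {u : X ⟶ Y} (hu : HasFiberIn A u) (hP : IsTriangSub P)
    (hAP : A ⊆ P) (hY : Y ∈ P) : X ∈ P := by
  obtain ⟨a, f, h, ha, hT⟩ := hu
  exact hP.cone_mem _ (inv_rot_of_distTriang _ hT) (hP.shift_mem (-1) hY) (hAP ha)

lemma HasCofiberIn.mem_of_mem {v : K ⟶ X} (hv : HasCofiberIn A v) (hP : IsTriangSub P)
    (hAP : A ⊆ P) (hK : K ∈ P) : X ∈ P := by
  obtain ⟨a, g, h, ha, hT⟩ := hv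
  exact hP.cone_mem _ (inv_rot_of_distTriang _ hT) (hP.shift_mem (-1) (hAP ha)) hK

lemma exists_reflection_of_isLeftAdjoint (hA : IsShiftClosed A)
    [(ObjectProperty.ι (· ∈ A)).IsLeftAdjoint] (X : C) :
    ∃ (Y : C) (u : X ⟶ Y), IsReflection (rightOrth A) u ∧ HasFiberIn A u := by
  let adj := Adjunction.ofIsLeftAdjoint (ObjectProperty.ι (· ∈ A))
  obtain ⟨Y, g, h, hT⟩ := distinguished_cocone_triangle (adj.counit.app X)
  have hY := mem_rightOrth_of_isCoreflection_mor₁ hT hA (isCoreflection_counit adj X)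
  have ha := ((ObjectProperty.ι (· ∈ A)).rightAdjoint.obj X).property
  exact ⟨Y, g, isReflection_rightOrth_mor₂ hT hA ha hY, _, _, h, ha, hT⟩

lemma exists_coreflection_of_isRightAdjoint (hA : IsShiftClosed A)
    [(ObjectProperty.ι (· ∈ A)).IsRightAdjoint] (X : C) :
    ∃ (K : C) (v : K ⟶ X), IsCoreflection (leftOrth A) v ∧ HasCofiberIn A v := by
  let adj := Adjunction.ofIsRightAdjoint (ObjectProperty.ι (· ∈ A))
  obtain ⟨K, v, h, hT⟩ := distinguished_cocone_triangle₁ (adj.unit.app X)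
  have hK := mem_leftOrth_of_isReflection_mor₂ hT hA (isReflection_unit adj X)
  have ha := ((ObjectProperty.ι (· ∈ A)).leftAdjoint.obj X).property
  exact ⟨K, v, isCoreflection_leftOrth_mor₁ hT hA hK ha, _, _, h, ha, hT⟩

lemma leftOrth_rightOrth_subset (hP : IsTriangSub P)
    (h : ∀ X : C, ∃ (Y : C) (u : X ⟶ Y), IsReflection (rightOrth P) u ∧ (Y ∈ P → X ∈ P)) :
    leftOrth (rightOrth P) ⊆ P := fun W hW =>
  let ⟨_, u, hu, hP'⟩ := h W
  hP' (hP.zero_mem (hu.isZero (hW hu.mem u)))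

lemma rightOrth_leftOrth_subset (hP : IsTriangSub P)
    (h : ∀ X : C, ∃ (K : C) (v : K ⟶ X), IsCoreflection (leftOrth P) v ∧ (K ∈ P → X ∈ P)) :
    rightOrth (leftOrth P) ⊆ P := fun Z hZ =>
  let ⟨_, v, hv, hP'⟩ := h Z
  hP' (hP.zero_mem (hv.isZero (hZ hv.mem v)))

lemma IsReflection.hasFiberIn {u : X ⟶ Y} (hA : IsShiftClosed A)
    (hsub : leftOrth (rightOrth A) ⊆ A) (hu : IsReflection (rightOrth A) u) : HasFiberIn A u :=
  let ⟨_, f, h, hT⟩ := distinguished_cocone_triangle₁ u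
  ⟨_, f, h, hsub (mem_leftOrth_of_isReflection_mor₂ hT hA.rightOrth hu), hT⟩

lemma IsCoreflection.hasCofiberIn {v : K ⟶ X} (hA : IsShiftClosed A)
    (hsub : rightOrth (leftOrth A) ⊆ A) (hv : IsCoreflection (leftOrth A) v) :
    HasCofiberIn A v :=
  let ⟨_, g, h, hT⟩ := distinguished_cocone_triangle v
  ⟨_, g, h, hsub (mem_rightOrth_of_isCoreflection_mor₁ hT hA.leftOrth hv), hT⟩

lemma leftOrth_rightOrth_subset_of_isLeftAdjoint (hA : IsTriangSub A)
    [(ObjectProperty.ι (· ∈ A)).IsLeftAdjoint] : leftOrth (rightOrth A) ⊆ A :=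
  leftOrth_rightOrth_subset hA fun X =>
    let ⟨Y, u, hu, hF⟩ := exists_reflection_of_isLeftAdjoint hA.shift_mem X
    ⟨Y, u, hu, hF.mem_of_mem hA le_rfl⟩

lemma IsReflection.comp_of_semiorthogonal {m : ℕ} {A : Fin (m + 1) → Set C}
    (hA : IsShiftClosed (A 0)) (hso : Semiorthogonal A) {u : X ⟶ Y} {v : Y ⟶ Z}
    (hu : IsReflection (rightOrth (⋃ j : Fin m, A j.succ)) u)
    (hv : IsReflection (rightOrth (A 0)) v) (hF : HasFiberIn (A 0) v) : IsReflection (rightOrth (⋃ j, A j)) (u ≫ v) := by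
  refine hu.comp hv (mem_rightOrth_iUnion.2 (Fin.cases hv.mem fun j => ?_))
    (fun _ hZ => mem_rightOrth_iUnion.2 fun j => mem_rightOrth_iUnion.1 hZ j.succ)
    (fun _ hZ => mem_rightOrth_iUnion.1 hZ 0)
  exact hF.mem_rightOrth hA (hso (Fin.succ_pos j)) (mem_rightOrth_iUnion.1 hu.mem j)

theorem exists_reflection_rightOrth_iUnion : ∀ {m : ℕ} {A : Fin m → Set C},
    (∀ j, IsShiftClosed (A j)) → Semiorthogonal A →
    (∀ j X, ∃ (Y : C) (u : X ⟶ Y), IsReflection (rightOrth (A j)) u ∧ HasFiberIn (A j) u) →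
    ∀ X : C, ∃ (Y : C) (u : X ⟶ Y), IsReflection (rightOrth (⋃ j, A j)) u ∧
      ∀ P : Set C, IsTriangSub P → (∀ j, A j ⊆ P) → Y ∈ P → X ∈ P
  | 0, _, _, _, _, X =>
    ⟨X, 𝟙 X, .id (mem_rightOrth_iUnion.2 fun j => j.elim0), fun _ _ _ => id⟩
  | m + 1, A, hA, hso, hrefl, X => by
    obtain ⟨Y', u, hu, hY'⟩ := exists_reflection_rightOrth_iUnion (fun j => hA j.succ) hso.tail
      (fun j => hrefl j.succ) X
    obtain ⟨Y, v, hv, hF⟩ := hrefl 0 Y'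
    exact ⟨Y, u ≫ v, hu.comp_of_semiorthogonal (hA 0) hso hv hF, fun P hP hAP hY =>
      hY' P hP (fun j => hAP j.succ) (hF.mem_of_mem hP (hAP 0) hY)⟩

/-- Unlike the reflections, the coreflections are applied in the order `0, …, m-1`: only then
does semiorthogonality keep each new object in the left orthogonals already reached. -/
theorem exists_coreflection_leftOrth_iUnion : ∀ {m : ℕ} {A : Fin m → Set C},
    (∀ j, IsShiftClosed (A j)) → Semiorthogonal A →
    (∀ j X, ∃ (K : C) (v : K ⟶ X), IsCoreflection (leftOrth (A j)) v ∧ HasCofiberIn (A j) v) →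
    ∀ X : C, ∃ (K : C) (v : K ⟶ X), IsCoreflection (leftOrth (⋃ j, A j)) v ∧
      ∀ P : Set C, IsTriangSub P → (∀ j, A j ⊆ P) → K ∈ P → X ∈ P
  | 0, _, _, _, _, X =>
    ⟨X, 𝟙 X, .id (mem_leftOrth_iUnion.2 fun j => j.elim0), fun _ _ _ => id⟩
  | m + 1, A, hA, hso, hcorefl, X => by
    obtain ⟨K', v, hv, hK'⟩ := exists_coreflection_leftOrth_iUnion (fun j => hA j.castSucc)
      hso.init (fun j => hcorefl j.castSucc) X
    obtain ⟨K, w, hw, hF⟩ := hcorefl (Fin.last m) K'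
    have hK : K ∈ leftOrth (⋃ j, A j) := mem_leftOrth_iUnion.2 (Fin.lastCases hw.mem fun j =>
      hF.mem_leftOrth (hA _) (hso (Fin.castSucc_lt_last j)) (mem_leftOrth_iUnion.1 hv.mem j))
    exact ⟨K, w ≫ v, hw.comp hv hK (fun _ hW => mem_leftOrth_iUnion.1 hW (Fin.last m))
      (fun _ hW => mem_leftOrth_iUnion.2 fun j => mem_leftOrth_iUnion.1 hW j.castSucc),
      fun P hP hAP hKP => hK' P hP (fun j => hAP j.castSucc) (hF.mem_of_mem hP (hAP _) hKP)⟩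

end Pretriangulated

section Generated

variable [HasZeroObject C] [Preadditive C] [HasShift C ℤ]
  [∀ n : ℤ, (shiftFunctor C n).Additive] [Pretriangulated C]
  {n : ℕ} {A : Fin n → Set C}

theorem isLeftAdjoint_ι_generated (hA : ∀ j, IsTriangSub (A j))
    (hadj : ∀ j, (ObjectProperty.ι (· ∈ A j)).IsLeftAdjoint) (hso : Semiorthogonal A) :
    (ObjectProperty.ι (· ∈ generated (⋃ j, A j))).IsLeftAdjoint := by
  have hD := isTriangSub_generated (⋃ j, A j)
  have hAD : ∀ j, A j ⊆ generated (⋃ j, A j) :=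
    fun j => (Set.subset_iUnion A j).trans (subset_generated _)
  have hrefl : ∀ X : C, ∃ (Y : C) (u : X ⟶ Y),
      IsReflection (rightOrth (generated (⋃ j, A j))) u ∧
        (Y ∈ generated (⋃ j, A j) → X ∈ generated (⋃ j, A j)) := fun X => by
    obtain ⟨Y, u, hu, hP⟩ := exists_reflection_rightOrth_iUnion (fun j => (hA j).shift_mem) hso
      (fun j => exists_reflection_of_isLeftAdjoint (hA j).shift_mem) X
    rw [← rightOrth_generated (IsShiftClosed.iUnion fun j => (hA j).shift_mem)] at hu
    exact ⟨Y, u, hu, hP _ hD hAD⟩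
  refine isLeftAdjoint_ι_of_isCoreflection fun X => ?_
  obtain ⟨Y, u, hu, -⟩ := hrefl X
  obtain ⟨d, f, h, hd, hT⟩ := hu.hasFiberIn hD.shift_mem (leftOrth_rightOrth_subset hD hrefl)
  exact ⟨d, f, isCoreflection_mor₁ hT hD.shift_mem hd hu.mem⟩

theorem isRightAdjoint_ι_generated (hA : ∀ j, IsTriangSub (A j))
    (hadj : ∀ j, (ObjectProperty.ι (· ∈ A j)).IsRightAdjoint) (hso : Semiorthogonal A) :
    (ObjectProperty.ι (· ∈ generated (⋃ j, A j))).IsRightAdjoint := by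
  have hD := isTriangSub_generated (⋃ j, A j)
  have hAD : ∀ j, A j ⊆ generated (⋃ j, A j) :=
    fun j => (Set.subset_iUnion A j).trans (subset_generated _)
  have hcorefl : ∀ X : C, ∃ (K : C) (v : K ⟶ X),
      IsCoreflection (leftOrth (generated (⋃ j, A j))) v ∧
        (K ∈ generated (⋃ j, A j) → X ∈ generated (⋃ j, A j)) := fun X => by
    obtain ⟨K, v, hv, hP⟩ := exists_coreflection_leftOrth_iUnion (fun j => (hA j).shift_mem) hso
      (fun j => exists_coreflection_of_isRightAdjoint (hA j).shift_mem) X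
    rw [← leftOrth_generated (IsShiftClosed.iUnion fun j => (hA j).shift_mem)] at hv
    exact ⟨K, v, hv, hP _ hD hAD⟩
  refine isRightAdjoint_ι_of_isReflection fun X => ?_
  obtain ⟨K, v, hv, -⟩ := hcorefl X
  obtain ⟨d, g, h, hd, hT⟩ := hv.hasCofiberIn hD.shift_mem (rightOrth_leftOrth_subset hD hcorefl)
  exact ⟨d, g, isReflection_mor₂ hT hD.shift_mem hv.mem hd⟩

def compFamUnit : ∀ {m : ℕ} (L : Fin m → C ⥤ C), (∀ j, 𝟭 C ⟶ L j) → (𝟭 C ⟶ compFam L)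
  | 0, _, _ => 𝟙 _
  | _ + 1, L, U => compFamUnit (fun j => L j.succ) (fun j => U j.succ) ≫
      Functor.whiskerLeft (compFam fun j => L j.succ) (U 0)

theorem isReflection_compFamUnit : ∀ {m : ℕ} {A : Fin m → Set C},
    (∀ j, IsShiftClosed (A j)) → Semiorthogonal A → ∀ {L : Fin m → C ⥤ C} {U : ∀ j, 𝟭 C ⟶ L j},
    (∀ j X, IsReflection (rightOrth (A j)) ((U j).app X)) →
    (∀ j X, HasFiberIn (A j) ((U j).app X)) →
    ∀ X, IsReflection (rightOrth (⋃ j, A j)) ((compFamUnit L U).app X)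
  | 0, _, _, _, _, _, _, _, _ => .id (mem_rightOrth_iUnion.2 fun j => j.elim0)
  | _ + 1, _, hA, hso, _, _, hU, hF, X =>
    (isReflection_compFamUnit (fun j => hA j.succ) hso.tail (fun j => hU j.succ)
      (fun j => hF j.succ) X).comp_of_semiorthogonal (hA 0) hso (hU 0 _) (hF 0 _)

theorem nonempty_iso_compFam (hA : ∀ j, IsTriangSub (A j))
    (hadj : ∀ j, (ObjectProperty.ι (· ∈ A j)).IsLeftAdjoint) (hso : Semiorthogonal A)
    {Lgen : C ⥤ C} (hLgen : IsLeftMutation (generated (⋃ j, A j)) Lgen)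
    {L : Fin n → C ⥤ C} (hL : ∀ j, IsLeftMutation (A j) (L j)) : Nonempty (Lgen ≅ compFam L) := by
  choose U hU using fun j => (hL j).exists_unit
  obtain ⟨Ugen, hUgen⟩ := hLgen.exists_unit
  rw [rightOrth_generated (IsShiftClosed.iUnion fun j => (hA j).shift_mem)] at hUgen
  exact nonempty_iso_of_isReflection hUgen (isReflection_compFamUnit (fun j => (hA j).shift_mem)
    hso hU fun j X => (hU j X).hasFiberIn (hA j).shift_mem
      (leftOrth_rightOrth_subset_of_isLeftAdjoint (hA j)))

end Generated

section Statements

variable [HasZeroObject C] [Preadditive C] [HasShift C ℤ]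
  [∀ n : ℤ, (shiftFunctor C n).Additive] [Pretriangulated C]

theorem statement8_general {n : ℕ} (A : Fin n → Set C)
    (hadm : ∀ j, IsAdmissible (A j)) (hso : Semiorthogonal A) :
    IsAdmissible (generated (⋃ j, A j)) ∧
    ∀ Lgen : C ⥤ C, IsLeftMutation (generated (⋃ j, A j)) Lgen →
      ∀ L : Fin n → (C ⥤ C), (∀ j, IsLeftMutation (A j) (L j)) →
        Nonempty (Lgen ≅ compFam L) := by
  have hA : ∀ j, IsTriangSub (A j) := fun j => (hadm j).1
  have hadjR : ∀ j, (ObjectProperty.ι (· ∈ A j)).IsRightAdjoint := fun j => (hadm j).2.1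
  have hadjL : ∀ j, (ObjectProperty.ι (· ∈ A j)).IsLeftAdjoint := fun j => (hadm j).2.2
  exact ⟨⟨isTriangSub_generated _, isRightAdjoint_ι_generated hA hadjR hso,
      isLeftAdjoint_ι_generated hA hadjL hso⟩,
    fun _ hLgen _ hL => nonempty_iso_compFam hA hadjL hso hLgen hL⟩

/-- if `A 0, …, A (n-1)` (with `n ≥ 2`) are admissible subcategories
forming a semiorthogonal sequence, then the generated subcategory `⟨A 0, …, A (n-1)⟩` is
admissible and its left mutation functor is naturally isomorphic to the composition
`L_{A 0} ∘ L_{A 1} ∘ ⋯ ∘ L_{A (n-1)}`. -/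
theorem statement8 {n : ℕ} (hn : 2 ≤ n) (A : Fin n → Set C)
    (hadm : ∀ j, IsAdmissible (A j)) (hso : Semiorthogonal A) :
    IsAdmissible (generated (⋃ j, A j)) ∧
    ∀ Lgen : C ⥤ C, IsLeftMutation (generated (⋃ j, A j)) Lgen →
      ∀ L : Fin n → (C ⥤ C), (∀ j, IsLeftMutation (A j) (L j)) →
        Nonempty (Lgen ≅ compFam L) :=
  statement8_general A hadm hso

end Statements
end HPD
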